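/- Let T, T' > 0 and suppose (c_k)_{k≥1} is a strictly increasing sequence with values in {nT + n'T' : n, n' ∈ ℕ} and lim_{k→∞} c_k²/k = 2V for some V > 0. Then V ≥ TT'. -/

import Mathlib

/-!
The `k + 1` distinct values `c 0 < ⋯ < c k` give `k + 1` distinct lattice points `(n, n')` with
`n T + n' T' ≤ c k`. The unit squares `[n, n + 1] × [n', n' + 1]` attached to them lie in the
triangle `x T + y T' ≤ c k + T + T'`, so `k + 1 ≤ (c k + T + T')² / (2 T T')`. Since
`c k ² / k → 2 V`, also `(c k + T + T')² / k → 2 V`, whence `2 T T' ≤ 2 V`.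
-/

open Finset Filter Topology

lemma card_le_div_of_forall_add_one_mul_le {a b : ℝ} (ha : 0 < a) (hb : 0 ≤ b) (t : Finset ℕ)
    (ht : ∀ j ∈ t, (j + 1) * a ≤ b) : (#t : ℝ) ≤ b / a := by
  have hsub : t ⊆ range ⌊b / a⌋₊ := fun j hj => by
    rw [mem_range, ← Nat.add_one_le_iff, Nat.le_floor_iff' j.succ_ne_zero, le_div_iff₀ ha]
    exact_mod_cast ht j hj
  calc (#t : ℝ) ≤ ⌊b / a⌋₊ := by exact_mod_cast (card_le_card hsub).trans (card_range _).le
    _ ≤ b / a := Nat.floor_le (by positivity)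

lemma sum_range_natCast_add_one (M : ℕ) : ∑ m ∈ range M, ((m : ℝ) + 1) = M * (M + 1) / 2 := by
  induction M with
  | zero => simp
  | succ M ih => rw [sum_range_succ, ih]; push_cast; ring

lemma card_le_sq_div_of_forall_add_one_mul_le {T T' d : ℝ} (hT : 0 < T) (hT' : 0 < T')
    (s : Finset (ℕ × ℕ)) (hs : ∀ p ∈ s, ((p.1 : ℝ) + 1) * T + ((p.2 : ℝ) + 1) * T' ≤ d) :
    (#s : ℝ) ≤ d ^ 2 / (2 * T * T') := by
  set M := ⌊d / T⌋₊
  have hfst : ∀ p ∈ s, p.1 ∈ range M := fun p hp => by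
    rw [mem_range, ← Nat.add_one_le_iff, Nat.le_floor_iff' p.1.succ_ne_zero, le_div_iff₀ hT]
    push_cast
    nlinarith [hs p hp, (p.2.cast_nonneg : (0 : ℝ) ≤ p.2)]
  have hfiber : ∀ m ∈ range M, (#(s.filter (·.1 = m)) : ℝ) ≤ (d - (m + 1) * T) / T' := by
    intro m hm
    have hmM : ((m : ℝ) + 1) * T ≤ d := by
      rw [← le_div_iff₀ hT]
      exact_mod_cast (Nat.le_floor_iff' m.succ_ne_zero).1 (mem_range.1 hm)
    rw [← card_image_of_injOn (f := Prod.snd) fun p hp q hq h =>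
      Prod.ext ((mem_filter.1 hp).2.trans (mem_filter.1 hq).2.symm) h]
    refine card_le_div_of_forall_add_one_mul_le hT' (by linarith) _ fun j hj => ?_
    obtain ⟨p, hp, rfl⟩ := mem_image.1 hj
    obtain ⟨hps, rfl⟩ := mem_filter.1 hp
    linarith [hs p hps]
  have hM : (M : ℝ) * d - M * (M + 1) / 2 * T ≤ d ^ 2 / (2 * T) := by
    rw [le_div_iff₀ (by positivity)]
    nlinarith [sq_nonneg (d - M * T), mul_nonneg (mul_nonneg hT.le hT.le) M.cast_nonneg]
  calc (#s : ℝ) = ∑ m ∈ range M, (#(s.filter (·.1 = m)) : ℝ) := by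
        exact_mod_cast card_eq_sum_card_fiberwise hfst
    _ ≤ ∑ m ∈ range M, (d - (m + 1) * T) / T' := sum_le_sum hfiber
    _ = (M * d - M * (M + 1) / 2 * T) / T' := by
        rw [← sum_div, sum_sub_distrib, ← sum_mul, sum_range_natCast_add_one, sum_const,
          card_range, nsmul_eq_mul]
    _ ≤ d ^ 2 / (2 * T) / T' := by gcongr
    _ = d ^ 2 / (2 * T * T') := by rw [div_div]

lemma natCast_add_one_le_of_strictMono {T T' : ℝ} (hT : 0 < T) (hT' : 0 < T') {c : ℕ → ℝ}
    (hmono : StrictMono c) (hmem : ∀ k, ∃ n n' : ℕ, c k = n * T + n' * T') (k : ℕ) :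
    (k : ℝ) + 1 ≤ (c k + T + T') ^ 2 / (2 * T * T') := by
  choose n n' hc using hmem
  have hinj : Set.InjOn (fun j => (n j, n' j)) (range (k + 1)) := fun i _ j _ h => by
    simp only [Prod.mk.injEq] at h
    exact hmono.injective (by rw [hc i, hc j, h.1, h.2])
  have hcount := card_le_sq_div_of_forall_add_one_mul_le hT hT'
    ((range (k + 1)).image fun j => (n j, n' j)) (d := c k + T + T') fun p hp => by
      obtain ⟨j, hj, rfl⟩ := mem_image.1 hp
      have hjk : c j ≤ c k := hmono.monotone (Nat.lt_succ_iff.1 (mem_range.1 hj))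
      linarith [hc j]
  rwa [card_image_of_injOn hinj, card_range, Nat.cast_add_one] at hcount

lemma tendsto_add_sq_div_of_tendsto_sq_div {c : ℕ → ℝ} (hc : ∀ k, 0 ≤ c k) (a : ℝ) {L : ℝ}
    (h : Tendsto (fun k : ℕ => c k ^ 2 / k) atTop (𝓝 L)) :
    Tendsto (fun k : ℕ => (c k + a) ^ 2 / k) atTop (𝓝 L) := by
  have hL : 0 ≤ L := ge_of_tendsto' h fun k => by positivity
  have hsqrt : Tendsto (fun k : ℕ => √(k : ℝ)) atTop atTop :=
    Real.tendsto_sqrt_atTop.comp tendsto_natCast_atTop_atTop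
  have hc' : Tendsto (fun k : ℕ => c k / √(k : ℝ)) atTop (𝓝 √L) :=
    ((Real.continuous_sqrt.tendsto L).comp h).congr fun k => by
      simp only [Function.comp_apply, Real.sqrt_div' _ k.cast_nonneg, Real.sqrt_sq (hc k)]
  have hsum := (hc'.add (hsqrt.const_div_atTop a)).pow 2
  rw [add_zero, Real.sq_sqrt hL] at hsum
  exact hsum.congr fun k => by rw [← add_div, div_pow, Real.sq_sqrt k.cast_nonneg]

theorem stmt13_general (T T' : ℝ) (hT : 0 < T) (hT' : 0 < T') (c : ℕ → ℝ)
    (hmono : StrictMono c)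
    (hmem : ∀ k, ∃ n n' : ℕ, c k = n * T + n' * T')
    (V : ℝ)
    (hlim : Filter.Tendsto (fun k : ℕ => c k ^ 2 / k) Filter.atTop (nhds (2 * V))) :
    T * T' ≤ V := by
  have hc : ∀ k, 0 ≤ c k := fun k => by
    obtain ⟨n, n', hk⟩ := hmem k
    rw [hk]
    positivity
  have hbound : ∀ k ≥ 1, 2 * T * T' ≤ (c k + (T + T')) ^ 2 / k := fun k hk => by
    have hk' : (0 : ℝ) < k := by exact_mod_cast hk
    have := natCast_add_one_le_of_strictMono hT hT' hmono hmem k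
    rw [le_div_iff₀ (by positivity)] at this
    rw [le_div_iff₀ hk']
    nlinarith [mul_pos hT hT']
  have := ge_of_tendsto (tendsto_add_sq_div_of_tendsto_sq_div hc (T + T') hlim)
    (eventually_atTop.2 ⟨1, hbound⟩)
  linarith

theorem stmt13 (T T' : ℝ) (hT : 0 < T) (hT' : 0 < T') (c : ℕ → ℝ)
    (hmono : StrictMono c)
    (hmem : ∀ k, ∃ n n' : ℕ, c k = n * T + n' * T')
    (V : ℝ) (hV : 0 < V)
    (hlim : Filter.Tendsto (fun k : ℕ => c k ^ 2 / k) Filter.atTop (nhds (2 * V))) :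
    T * T' ≤ V :=
  stmt13_general T T' hT hT' c hmono hmem V hlim
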